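/- arXiv:2408.01758 — 4 statements merged into one kernel-verified Lean document; each statement's English description precedes it below -/
import Mathlib

section
/- Let A be a commutative ring, S₁ ⊆ S₂ two multiplicatively closed subsets of A with 1 ∈ S₁, and Q an ideal of A with Q ∩ S₂ = ∅. If Q is a weakly S₁-primary ideal of A, then the extension S₂⁻¹Q of Q in the localization S₂⁻¹A is a weakly (S₂⁻¹S₁)-primary ideal of S₂⁻¹A, where S₂⁻¹S₁ = {s/t : s ∈ S₁, t ∈ S₂} is a multiplicatively closed subset of S₂⁻¹A disjoint from S₂⁻¹Q. -/
/-- An ideal `J` of a commutative ring `B` (disjoint from `T`) is *weakly `T`-primary*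
if there exists `t ∈ T` such that for all `x y : B`, if `x*y ∈ J` and `x*y ≠ 0`,
then `t*x ∈ J` or `t*y ∈ rad(J)`. -/
def WeaklySPrimary {B : Type*} [CommRing B] (T : Set B) (J : Ideal B) : Prop :=
  ∃ t ∈ T, ∀ x y : B, x * y ∈ J → x * y ≠ 0 → t * x ∈ J ∨ t * y ∈ J.radical

/-!
Clearing denominators reduces everything to `A`: if `(a/u)(b/v)` lies in `S₂⁻¹Q` and is nonzero,
then `w a b ∈ Q` and `w a b ≠ 0` for some `w ∈ S₂`, and the weakly `S₁`-primary condition applied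
to the pair `(w a, b)` yields `t a ∈ Q` up to the unit `w`, or `t b ∈ rad Q`. So the image `t/1` of
the witness for `Q` is a witness for `S₂⁻¹Q`. The fractions `s/t` with `s ∈ S₁ ⊆ S₂` avoid
`S₂⁻¹Q` because `Q` meets no element of `S₂`.
-/

theorem WeaklySPrimary.mono {B : Type*} [CommRing B] {T T' : Set B} {J : Ideal B}
    (hJ : WeaklySPrimary T J) (hT : T ⊆ T') : WeaklySPrimary T' J :=
  let ⟨t, ht, h⟩ := hJ
  ⟨t, hT ht, h⟩

namespace IsLocalization

variable {A R : Type*} [CommRing A] [CommRing R] [Algebra A R] {M : Submonoid A}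
  [IsLocalization M R] {Q : Ideal A}

theorem mk'_notMem_map_algebraMap (hQM : Disjoint (Q : Set A) M) {s : A} (hs : s ∈ M)
    (u : M) : mk' R s u ∉ Q.map (algebraMap A R) := by
  rw [mk'_mem_map_algebraMap_iff M]
  rintro ⟨w, hw, hws⟩
  exact Set.disjoint_left.mp hQM hws (M.mul_mem hw hs)

theorem mk'_mem_radical_map_algebraMap {a : A} (ha : a ∈ Q.radical) (u : M) :
    mk' R a u ∈ (Q.map (algebraMap A R)).radical :=
  mk'_mem_iff.mpr (Ideal.map_radical_le _ (Ideal.mem_map_of_mem _ ha))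

end IsLocalization

open IsLocalization in
theorem WeaklySPrimary.map_algebraMap {A R : Type*} [CommRing A] [CommRing R] [Algebra A R]
    (M : Submonoid A) [IsLocalization M R] {S : Set A} {Q : Ideal A} (hQ : WeaklySPrimary S Q) :
    WeaklySPrimary (algebraMap A R '' S) (Q.map (algebraMap A R)) := by
  obtain ⟨t, ht, hprimary⟩ := hQ
  refine ⟨algebraMap A R t, ⟨t, ht, rfl⟩, fun x y hxy hxy0 => ?_⟩
  obtain ⟨⟨a, u⟩, rfl⟩ := mk'_surjective M x
  obtain ⟨⟨b, v⟩, rfl⟩ := mk'_surjective M y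
  rw [← mk'_mul] at hxy hxy0
  obtain ⟨w, hw, hwab⟩ := (mk'_mem_map_algebraMap_iff M R _ _ _).mp hxy
  have hwab0 : w * a * b ≠ 0 := fun h0 =>
    hxy0 ((mk'_eq_zero_iff _ _).mpr ⟨⟨w, hw⟩, by rwa [← mul_assoc]⟩)
  rw [mul_mk'_eq_mk'_of_mul, mul_mk'_eq_mk'_of_mul]
  rcases hprimary (w * a) b (by rwa [mul_assoc]) hwab0 with hwa | hb
  · exact .inl ((mk'_mem_map_algebraMap_iff M R _ _ _).mpr ⟨w, hw, by rwa [mul_left_comm]⟩)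
  · exact .inr (mk'_mem_radical_map_algebraMap hb v)

theorem weaklySPrimary_localization {A : Type*} [CommRing A] (S₁ S₂ : Submonoid A)
    (h12 : (S₁ : Set A) ⊆ (S₂ : Set A))
    (Q : Ideal A) (hQS : (Q : Set A) ∩ (S₂ : Set A) = ∅)
    (hQ : WeaklySPrimary (S₁ : Set A) Q) :
    ((Q.map (algebraMap A (Localization S₂)) : Set (Localization S₂)) ∩
        {z : Localization S₂ | ∃ s ∈ S₁, ∃ t : S₂,
          z = IsLocalization.mk' (Localization S₂) s t} = ∅) ∧
      WeaklySPrimary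
        {z : Localization S₂ | ∃ s ∈ S₁, ∃ t : S₂,
          z = IsLocalization.mk' (Localization S₂) s t}
        (Q.map (algebraMap A (Localization S₂))) := by
  have hQS : Disjoint (Q : Set A) S₂ := Set.disjoint_iff_inter_eq_empty.mpr hQS
  refine ⟨Set.eq_empty_iff_forall_notMem.mpr ?_, (hQ.map_algebraMap S₂).mono ?_⟩
  · rintro _ ⟨hz, s, hs, u, rfl⟩
    exact IsLocalization.mk'_notMem_map_algebraMap hQS (h12 hs) u hz
  · rintro _ ⟨s, hs, rfl⟩
    exact ⟨s, hs, 1, (IsLocalization.mk'_one _ s).symm⟩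
end

section
/- Let A be a commutative ring, S a multiplicatively closed subset of A, and Q a strongly weakly S-primary ideal of A. If Q*Q ≠ 0 (the product of Q with itself is not the zero ideal), then Q is an S-primary ideal of A. -/
/-- `Q` is *`S`-primary*: there is `s ∈ S` such that `x*y ∈ Q` implies
`s*x ∈ Q` or `s*y ∈ rad(Q)`. -/
def SPrimary {A : Type*} [CommRing A] (S : Set A) (Q : Ideal A) : Prop :=
  ∃ s ∈ S, ∀ x y : A, x * y ∈ Q → s * x ∈ Q ∨ s * y ∈ Q.radical

/-- `Q` is *strongly weakly `S`-primary*: there is `s ∈ S` such that for all ideals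
`I`, `J`, if `I*J ⊆ Q` and `I*J ≠ 0` then `s*I ⊆ Q` or `s*J ⊆ rad(Q)`. -/
def StronglyWeaklySPrimary {A : Type*} [CommRing A] (S : Set A) (Q : Ideal A) : Prop :=
  ∃ s ∈ S, ∀ I J : Ideal A, I * J ≤ Q → I * J ≠ ⊥ →
    (∀ x ∈ I, s * x ∈ Q) ∨ (∀ y ∈ J, s * y ∈ Q.radical)

namespace Ideal

variable {A : Type*} [CommRing A]

theorem span_singleton_sup_mul_span_singleton_sup_le {Q : Ideal A} {x y : A} (hxy : x * y ∈ Q) :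
    (span {x} ⊔ Q) * (span {y} ⊔ Q) ≤ Q := by
  rw [sup_mul, mul_sup, mul_sup]
  refine sup_le (sup_le ?_ mul_le_right) (sup_le mul_le_left mul_le_right)
  rwa [span_singleton_mul_span_singleton, span_singleton_le_iff_mem]

theorem sup_mul_sup_ne_bot {Q : Ideal A} (hQQ : Q * Q ≠ ⊥) (I J : Ideal A) :
    (I ⊔ Q) * (J ⊔ Q) ≠ ⊥ :=
  ne_bot_of_le_ne_bot hQQ (mul_mono le_sup_right le_sup_right)

end Ideal

theorem sPrimary_of_stronglyWeaklySPrimary_general {A : Type*} [CommRing A] (S : Set A)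
    (Q : Ideal A)
    (hQ : StronglyWeaklySPrimary S Q) (hQQ : Q * Q ≠ ⊥) :
    SPrimary S Q := by
  obtain ⟨s, hs, h⟩ := hQ
  refine ⟨s, hs, fun x y hxy => ?_⟩
  have hx : x ∈ Ideal.span {x} ⊔ Q := Ideal.mem_sup_left (Ideal.mem_span_singleton_self x)
  have hy : y ∈ Ideal.span {y} ⊔ Q := Ideal.mem_sup_left (Ideal.mem_span_singleton_self y)
  rcases h _ _ (Ideal.span_singleton_sup_mul_span_singleton_sup_le hxy)
    (Ideal.sup_mul_sup_ne_bot hQQ _ _) with hI | hJ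
  · exact Or.inl (hI x hx)
  · exact Or.inr (hJ y hy)

theorem sPrimary_of_stronglyWeaklySPrimary {A : Type*} [CommRing A] (S : Set A)
    (hS : ∀ a ∈ S, ∀ b ∈ S, a * b ∈ S)
    (Q : Ideal A) (hQS : (Q : Set A) ∩ S = ∅)
    (hQ : StronglyWeaklySPrimary S Q) (hQQ : Q * Q ≠ ⊥) :
    SPrimary S Q :=
  sPrimary_of_stronglyWeaklySPrimary_general S Q hQ hQQ
end

section
/- Let A be a commutative ring, S a multiplicatively closed subset of A, and Q a strongly weakly S-primary ideal of A. If Q is not an S-primary ideal of A, then rad(Q) = rad(0), i.e., the radical of Q equals the nilradical of A. -/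
/- If `s` is a witness for `Q` being strongly weakly `S`-primary and `x * y ∈ Q` shows that `s`
fails as an `S`-primary witness, then `I = (x) + Q` and `J = (y) + Q` satisfy `I * J ⊆ Q`, but
neither `s * I ⊆ Q` nor `s * J ⊆ rad(Q)`; hence `I * J = 0`, and so `Q² ⊆ I * J = 0`. An ideal
with square zero has the same radical as `0`. -/

namespace Ideal

variable {A : Type*} [CommRing A]

theorem radical_eq_radical_bot_of_pow_eq_bot {Q : Ideal A} {n : ℕ} (hn : n ≠ 0) (hQ : Q ^ n = ⊥) :
    Q.radical = (⊥ : Ideal A).radical := by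
  rw [← Q.radical_pow hn, hQ]

end Ideal

open Ideal in
theorem StronglyWeaklySPrimary.sq_eq_bot_of_not_sPrimary {A : Type*} [CommRing A] {S : Set A}
    {Q : Ideal A} (hQ : StronglyWeaklySPrimary S Q) (hnp : ¬ SPrimary S Q) : Q ^ 2 = ⊥ := by
  obtain ⟨s, hsS, hs⟩ := hQ
  unfold SPrimary at hnp
  push Not at hnp
  obtain ⟨x, y, hxy, hsx, hsy⟩ := hnp s hsS
  have hx : x ∈ span {x} ⊔ Q := mem_sup_left (mem_span_singleton_self x)
  have hy : y ∈ span {y} ⊔ Q := mem_sup_left (mem_span_singleton_self y)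
  have hIJ : (span {x} ⊔ Q) * (span {y} ⊔ Q) = ⊥ := by
    by_contra hne
    rcases hs _ _ (span_singleton_sup_mul_span_singleton_sup_le hxy) hne with h | h
    exacts [hsx (h x hx), hsy (h y hy)]
  rw [← le_bot_iff, ← hIJ, sq]
  exact mul_mono le_sup_right le_sup_right

theorem radical_eq_nilradical_of_not_sPrimary_general {A : Type*} [CommRing A] (S : Set A)
    (Q : Ideal A)
    (hQ : StronglyWeaklySPrimary S Q) (hnp : ¬ SPrimary S Q) :
    Q.radical = (⊥ : Ideal A).radical :=
  Ideal.radical_eq_radical_bot_of_pow_eq_bot two_ne_zero (hQ.sq_eq_bot_of_not_sPrimary hnp)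

theorem radical_eq_nilradical_of_not_sPrimary {A : Type*} [CommRing A] (S : Set A)
    (hS : ∀ a ∈ S, ∀ b ∈ S, a * b ∈ S)
    (Q : Ideal A) (hQS : (Q : Set A) ∩ S = ∅)
    (hQ : StronglyWeaklySPrimary S Q) (hnp : ¬ SPrimary S Q) :
    Q.radical = (⊥ : Ideal A).radical :=
  radical_eq_nilradical_of_not_sPrimary_general S Q hQ hnp
end

section
/- Let A be a commutative ring, S a multiplicatively closed subset of A, Q a strongly weakly S-primary ideal of A that is not an S-primary ideal, and M an A-module. If Q • M = M, then M = 0. -/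
theorem nakayama_stronglyWeaklySPrimary {A : Type*} [CommRing A] (S : Set A)
    (hS : ∀ a ∈ S, ∀ b ∈ S, a * b ∈ S)
    (Q : Ideal A) (hQS : (Q : Set A) ∩ S = ∅)
    (hQ : StronglyWeaklySPrimary S Q) (hnp : ¬ SPrimary S Q)
    (M : Type*) [AddCommGroup M] [Module A M]
    (hM : Q • (⊤ : Submodule A M) = ⊤) :
    ∀ m : M, m = 0 := by
  obtain ⟨s, hsS, hs⟩ := hQ
  unfold SPrimary at hnp
  push_neg at hnp
  obtain ⟨x, y, hxy, hx, hy⟩ := hnp s hsS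
  -- key: any "bad" pair multiplies to zero
  have key : ∀ a b : A, a * b ∈ Q → s * a ∉ Q → s * b ∉ Q.radical → a * b = 0 := by
    intro a b hab h1 h2
    by_contra hne
    rcases hs (Ideal.span {a}) (Ideal.span {b})
        (by rw [Ideal.span_singleton_mul_span_singleton]
            exact (Ideal.span_singleton_le_iff_mem Q).mpr hab)
        (by rw [Ideal.span_singleton_mul_span_singleton]
            simpa [Ideal.span_singleton_eq_bot] using hne) with h | h
    · exact h1 (h a (Ideal.mem_span_singleton_self a))
    · exact h2 (h b (Ideal.mem_span_singleton_self b))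
  have hxy0 : x * y = 0 := key x y hxy hx hy
  have step1 : ∀ q ∈ Q, x * q = 0 := by
    intro q hq
    have h2 : s * (y + q) ∉ Q.radical := fun h => hy (by
      have : s * y = s * (y + q) - s * q := by ring
      rw [this]
      exact Q.radical.sub_mem h (Q.le_radical (Q.mul_mem_left s hq)))
    have := key x (y + q) (by rw [mul_add]; exact Q.add_mem hxy (Q.mul_mem_left x hq)) hx h2
    rw [mul_add, hxy0, zero_add] at this
    exact this
  have step2 : ∀ q ∈ Q, q * y = 0 := by
    intro q hq
    have h1 : s * (x + q) ∉ Q := fun h => hx (by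
      have : s * x = s * (x + q) - s * q := by ring
      rw [this]
      exact Q.sub_mem h (Q.mul_mem_left s hq))
    have := key (x + q) y (by rw [add_mul]; exact Q.add_mem hxy (Q.mul_mem_right y hq)) h1 hy
    rw [add_mul, hxy0, zero_add] at this
    exact this
  have hQQ : Q * Q = ⊥ := by
    rw [eq_bot_iff]
    refine Ideal.mul_le.mpr (fun a ha b hb => ?_)
    have h1 : s * (x + a) ∉ Q := fun h => hx (by
      have : s * x = s * (x + a) - s * a := by ring
      rw [this]
      exact Q.sub_mem h (Q.mul_mem_left s ha))
    have h2 : s * (y + b) ∉ Q.radical := fun h => hy (by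
      have : s * y = s * (y + b) - s * b := by ring
      rw [this]
      exact Q.radical.sub_mem h (Q.le_radical (Q.mul_mem_left s hb)))
    have hmem : (x + a) * (y + b) ∈ Q := by
      have : (x + a) * (y + b) = x * y + x * b + a * y + a * b := by ring
      rw [this]
      exact Q.add_mem (Q.add_mem (Q.add_mem hxy (Q.mul_mem_left x hb))
        (Q.mul_mem_right y ha)) (Q.mul_mem_right b ha)
    have h0 := key (x + a) (y + b) hmem h1 h2
    have : (x + a) * (y + b) = a * b := by
      have e : (x + a) * (y + b) = x * y + x * b + a * y + a * b := by ring
      rw [e, hxy0, step1 b hb, step2 a ha]; ring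
    rw [this] at h0
    simpa using h0
  have htop : (⊤ : Submodule A M) = ⊥ := by
    conv_lhs => rw [← hM, ← hM]
    rw [← Submodule.smul_assoc, smul_eq_mul, hQQ, Submodule.bot_smul]
  intro m
  have : m ∈ (⊥ : Submodule A M) := htop ▸ Submodule.mem_top
  simpa using this
end
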